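/- Let α ∈ ℝ and c ∈ ℝ with c ≠ 0, and let q_w be the rogue wave q_w(x,t) = c·(−64c²α²t² − 16c⁴t² − 32c²αxt + 16ic²t − 4c²x² + 3)·exp(−2i(2α²t − c²t + αx)) / (64α²c²t² + 16c⁴t² + 32αc²tx + 4c²x² + 1). Then with X = x + 4αt one has |q_w(x,t)|² = c²·((3 − 16c⁴t² − 4c²X²)² + 256c⁴t²) / (1 + 16c⁴t² + 4c²X²)² for all (x,t); in particular |q_w(x,t)| ≤ 3|c| for all (x,t) ∈ ℝ², with equality if and only if (x,t) = (0,0). -/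

import Mathlib

/-!
Write `X = x + 4αt`. The polynomial prefactor of `q_w` is `c(3 − 16c⁴t² − 4c²X² + 16ic²t)`, its
denominator is `1 + 16c⁴t² + 4c²X²`, and the exponential has modulus one. With `u = 4c²X²` and
`v = 16c⁴t²` this gives `|q_w|² = c²((3 − u − v)² + 16v)/(1 + u + v)²`, and
`9(1 + u + v)² − (3 − u − v)² − 16v = 8(3u + v + (u + v)²)` is nonnegative for `u, v ≥ 0`,
vanishing only at `u = v = 0`.
-/

open Complex

/-- Partial derivative in `x` of a function of `(x,t)`. -/
noncomputable def pX (f : ℝ → ℝ → ℂ) : ℝ → ℝ → ℂ := fun x t => deriv (fun x' => f x' t) x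

/-- Partial derivative in `t` of a function of `(x,t)`. -/
noncomputable def pT (f : ℝ → ℝ → ℂ) : ℝ → ℝ → ℂ := fun x t => deriv (fun t' => f x t') t

/-- The rogue wave
`q_w(x,t) = c(−64c²α²t² − 16c⁴t² − 32c²αxt + 16ic²t − 4c²x² + 3) e^{−2i(2α²t − c²t + αx)}
  / (64α²c²t² + 16c⁴t² + 32αc²tx + 4c²x² + 1)`. -/
noncomputable def rogueWave (α c : ℝ) : ℝ → ℝ → ℂ := fun x t =>
  (c : ℂ) * (-64 * (c : ℂ) ^ 2 * (α : ℂ) ^ 2 * (t : ℂ) ^ 2 - 16 * (c : ℂ) ^ 4 * (t : ℂ) ^ 2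
      - 32 * (c : ℂ) ^ 2 * (α : ℂ) * (x : ℂ) * (t : ℂ) + 16 * I * (c : ℂ) ^ 2 * (t : ℂ)
      - 4 * (c : ℂ) ^ 2 * (x : ℂ) ^ 2 + 3)
    * Complex.exp (-2 * I * ((2 * α ^ 2 * t - c ^ 2 * t + α * x : ℝ) : ℂ))
    / ((64 * α ^ 2 * c ^ 2 * t ^ 2 + 16 * c ^ 4 * t ^ 2 + 32 * α * c ^ 2 * t * x
        + 4 * c ^ 2 * x ^ 2 + 1 : ℝ) : ℂ)

noncomputable def rogueProfile (u v : ℝ) : ℝ := ((3 - v - u) ^ 2 + 16 * v) / (1 + v + u) ^ 2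

lemma nine_mul_denom_sq_sub_num (u v : ℝ) :
    9 * (1 + v + u) ^ 2 - ((3 - v - u) ^ 2 + 16 * v) = 8 * (3 * u + v + (u + v) ^ 2) := by
  ring

section Profile

variable {u v : ℝ}

lemma rogueProfile_le_nine (hu : 0 ≤ u) (hv : 0 ≤ v) : rogueProfile u v ≤ 9 := by
  rw [rogueProfile, div_le_iff₀ (by positivity)]
  nlinarith [nine_mul_denom_sq_sub_num u v, sq_nonneg (u + v)]

lemma rogueProfile_eq_nine_iff (hu : 0 ≤ u) (hv : 0 ≤ v) :
    rogueProfile u v = 9 ↔ u = 0 ∧ v = 0 := by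
  rw [rogueProfile, div_eq_iff (by positivity)]
  constructor
  · intro h
    have hsum : 3 * u + v + (u + v) ^ 2 = 0 := by
      nlinarith [nine_mul_denom_sq_sub_num u v]
    constructor <;> nlinarith [sq_nonneg (u + v)]
  · rintro ⟨rfl, rfl⟩
    norm_num

end Profile

section RogueWave

variable (α c x t : ℝ)

lemma rogueWave_eq :
    rogueWave α c x t =
      c * (((3 - 16 * c ^ 4 * t ^ 2 - 4 * c ^ 2 * (x + 4 * α * t) ^ 2 : ℝ) : ℂ)
          + ((16 * c ^ 2 * t : ℝ) : ℂ) * I)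
        / ((1 + 16 * c ^ 4 * t ^ 2 + 4 * c ^ 2 * (x + 4 * α * t) ^ 2 : ℝ) : ℂ)
        * exp (((-2 * (2 * α ^ 2 * t - c ^ 2 * t + α * x) : ℝ) : ℂ) * I) := by
  simp only [rogueWave]
  push_cast
  ring_nf

lemma norm_sq_rogueWave :
    ‖rogueWave α c x t‖ ^ 2 =
      c ^ 2 * rogueProfile (4 * c ^ 2 * (x + 4 * α * t) ^ 2) (16 * c ^ 4 * t ^ 2) := by
  have hD : 0 < 1 + 16 * c ^ 4 * t ^ 2 + 4 * c ^ 2 * (x + 4 * α * t) ^ 2 := by positivity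
  rw [rogueWave_eq, norm_mul, Complex.norm_exp_ofReal_mul_I, mul_one, norm_div, norm_mul,
    Complex.norm_real, Complex.norm_real, Real.norm_eq_abs, Real.norm_eq_abs, abs_of_pos hD,
    div_pow, mul_pow, Complex.sq_norm, Complex.normSq_add_mul_I, sq_abs, rogueProfile]
  ring

lemma sq_three_mul_abs : (3 * |c|) ^ 2 = c ^ 2 * 9 := by
  rw [mul_pow, sq_abs]
  ring

lemma norm_rogueWave_le : ‖rogueWave α c x t‖ ≤ 3 * |c| := by
  rw [← sq_le_sq₀ (norm_nonneg _) (by positivity), norm_sq_rogueWave, sq_three_mul_abs]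
  exact mul_le_mul_of_nonneg_left (rogueProfile_le_nine (by positivity) (by positivity))
    (sq_nonneg c)

lemma norm_rogueWave_eq_iff {c : ℝ} (hc : c ≠ 0) :
    ‖rogueWave α c x t‖ = 3 * |c| ↔ x = 0 ∧ t = 0 := by
  rw [← sq_eq_sq₀ (norm_nonneg _) (by positivity), norm_sq_rogueWave, sq_three_mul_abs,
    mul_right_inj' (pow_ne_zero 2 hc), rogueProfile_eq_nine_iff (by positivity) (by positivity)]
  simp only [mul_eq_zero, OfNat.ofNat_ne_zero, ne_eq, not_false_eq_true, pow_eq_zero_iff, hc,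
    or_self, false_or, and_congr_left_iff]
  rintro rfl
  simp

end RogueWave

/-- with `X = x + 4αt`, the squared modulus of the rogue wave is
`c²((3 − 16c⁴t² − 4c²X²)² + 256c⁴t²)/(1 + 16c⁴t² + 4c²X²)²`; in particular
`|q_w| ≤ 3|c|`, with equality iff `(x,t) = (0,0)`. -/
theorem statement15 (α c : ℝ) (hc : c ≠ 0) :
    ∀ x t : ℝ,
      (‖rogueWave α c x t‖ ^ 2
        = c ^ 2 * ((3 - 16 * c ^ 4 * t ^ 2 - 4 * c ^ 2 * (x + 4 * α * t) ^ 2) ^ 2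
              + 256 * c ^ 4 * t ^ 2)
          / (1 + 16 * c ^ 4 * t ^ 2 + 4 * c ^ 2 * (x + 4 * α * t) ^ 2) ^ 2)
      ∧ ‖rogueWave α c x t‖ ≤ 3 * |c|
      ∧ (‖rogueWave α c x t‖ = 3 * |c| ↔ x = 0 ∧ t = 0) := by
  intro x t
  refine ⟨?_, norm_rogueWave_le α c x t, norm_rogueWave_eq_iff α x t hc⟩
  rw [norm_sq_rogueWave, rogueProfile]
  ring
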